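/- arXiv:1412.4020 — 6 statements merged into one kernel-verified Lean document; each statement's English description precedes it below -/
import Mathlib

section
/- If H is a strict almost-direct product of finite groups G1, G2, G3 (i.e., H ≤ G1 × G2 × G3 satisfies: for every pair of coordinates from two of the groups there is a unique element in the third group making the triple belong to H, and H ≠ G1 × G2 × G3), then H is a commutative group. -/
/-!
Take `c, c' ∈ G3`. By existence of completions, `H` contains some `x = (a, 1, c)` and
`y = (1, b, c')`. The products `x * y` and `y * x` agree in the first two coordinates, so by
uniqueness of the third coordinate they agree in the third: `c * c' = c' * c`. The hypotheses
are invariant under cyclically permuting the coordinates, so all three factors are commutative,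
hence so is `H`.
-/

namespace Subgroup

variable {A B C : Type*} [Group A] [Group B] [Group C]

structure HasUniqueCompletions (H : Subgroup (A × B × C)) : Prop where
  existsUnique_fst : ∀ (b : B) (c : C), ∃! a : A, (a, b, c) ∈ H
  existsUnique_snd : ∀ (a : A) (c : C), ∃! b : B, (a, b, c) ∈ H
  existsUnique_thd : ∀ (a : A) (b : B), ∃! c : C, (a, b, c) ∈ H

abbrev rotate (H : Subgroup (A × B × C)) : Subgroup (B × C × A) :=
  H.comap (MulEquiv.prodComm.trans MulEquiv.prodAssoc).symm.toMonoidHom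

theorem HasUniqueCompletions.rotate {H : Subgroup (A × B × C)} (hH : H.HasUniqueCompletions) :
    H.rotate.HasUniqueCompletions where
  existsUnique_fst c a := hH.existsUnique_snd a c
  existsUnique_snd b a := hH.existsUnique_thd a b
  existsUnique_thd b c := hH.existsUnique_fst b c

theorem HasUniqueCompletions.commute_thd {H : Subgroup (A × B × C)}
    (hH : H.HasUniqueCompletions) (c c' : C) : Commute c c' := by
  obtain ⟨a, hx, -⟩ := hH.existsUnique_fst 1 c
  obtain ⟨b, hy, -⟩ := hH.existsUnique_snd 1 c'
  have hxy : (a, b, c * c') ∈ H := by simpa using H.mul_mem hx hy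
  have hyx : (a, b, c' * c) ∈ H := by simpa using H.mul_mem hy hx
  exact (hH.existsUnique_thd a b).unique hxy hyx

end Subgroup

theorem strict_almost_direct_product_comm_general
    {G1 G2 G3 : Type*} [Group G1] [Group G2] [Group G3]
    (H : Subgroup (G1 × G2 × G3))
    (h1 : ∀ (b : G2) (c : G3), ∃! a : G1, ((a, b, c) : G1 × G2 × G3) ∈ H)
    (h2 : ∀ (a : G1) (c : G3), ∃! b : G2, ((a, b, c) : G1 × G2 × G3) ∈ H)
    (h3 : ∀ (a : G1) (b : G2), ∃! c : G3, ((a, b, c) : G1 × G2 × G3) ∈ H) :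
    ∀ x y : G1 × G2 × G3, x ∈ H → y ∈ H → x * y = y * x := by
  have hH : H.HasUniqueCompletions := ⟨h1, h2, h3⟩
  intro x y _ _
  exact Prod.ext (hH.rotate.commute_thd x.1 y.1).eq <|
    Prod.ext (hH.rotate.rotate.commute_thd x.2.1 y.2.1).eq (hH.commute_thd x.2.2 y.2.2).eq

/-- A strict almost-direct product `H ≤ G1 × G2 × G3` of finite groups
(`H ≠ ⊤`, and for each pair of coordinates the completing element in the
remaining coordinate exists and is unique) is a commutative group. -/
theorem strict_almost_direct_product_comm
    {G1 G2 G3 : Type*} [Group G1] [Group G2] [Group G3]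
    [Finite G1] [Finite G2] [Finite G3]
    (H : Subgroup (G1 × G2 × G3))
    (hne : H ≠ ⊤)
    (h1 : ∀ (b : G2) (c : G3), ∃! a : G1, ((a, b, c) : G1 × G2 × G3) ∈ H)
    (h2 : ∀ (a : G1) (c : G3), ∃! b : G2, ((a, b, c) : G1 × G2 × G3) ∈ H)
    (h3 : ∀ (a : G1) (b : G2), ∃! c : G3, ((a, b, c) : G1 × G2 × G3) ∈ H) :
    ∀ x y : G1 × G2 × G3, x ∈ H → y ∈ H → x * y = y * x :=
  strict_almost_direct_product_comm_general H h1 h2 h3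
end

section
/- If H is a strict almost-direct product of finite groups G1, G2, and G3, then each of G1, G2, and G3 is commutative. -/
/-!
Take `x, y ∈ G1`. Completing `(x, ·, 1)` and `(y, 1, ·)` gives `(x, b, 1), (y, 1, c) ∈ H`; their
products in either order are `(xy, b, c)` and `(yx, b, c)`, because `(b, 1)` and `(1, c)` commute
in `G2 × G3`. Uniqueness of the first coordinate forces `xy = yx`; the other factors are symmetric.
-/

theorem Submonoid.commute_of_determined {M G Q R : Type*} [Monoid M] [Monoid G] [Monoid Q]
    [Monoid R] (S : Submonoid M) (p : M →* G) (q : M →* Q) (r : M →* R)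
    (hdet : ∀ m ∈ S, ∀ m' ∈ S, q m = q m' → r m = r m' → p m = p m')
    {m m' : M} (hm : m ∈ S) (hm' : m' ∈ S) (hr : r m = 1) (hq : q m' = 1) :
    Commute (p m) (p m') := by
  have hq' : q (m * m') = q (m' * m) := by simp [hq]
  have hr' : r (m * m') = r (m' * m) := by simp [hr]
  show p m * p m' = p m' * p m
  simpa only [map_mul] using hdet _ (S.mul_mem hm hm') _ (S.mul_mem hm' hm) hq' hr'

theorem strict_almost_direct_product_factors_comm_general
    {G1 G2 G3 : Type*} [Group G1] [Group G2] [Group G3]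
    (H : Subgroup (G1 × G2 × G3))
    (h1 : ∀ (b : G2) (c : G3), ∃! a : G1, ((a, b, c) : G1 × G2 × G3) ∈ H)
    (h2 : ∀ (a : G1) (c : G3), ∃! b : G2, ((a, b, c) : G1 × G2 × G3) ∈ H)
    (h3 : ∀ (a : G1) (b : G2), ∃! c : G3, ((a, b, c) : G1 × G2 × G3) ∈ H) :
    (∀ x y : G1, x * y = y * x) ∧ (∀ x y : G2, x * y = y * x) ∧
      (∀ x y : G3, x * y = y * x) := by
  let p1 : G1 × G2 × G3 →* G1 := MonoidHom.fst _ _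
  let p2 : G1 × G2 × G3 →* G2 := (MonoidHom.fst _ _).comp (MonoidHom.snd _ _)
  let p3 : G1 × G2 × G3 →* G3 := (MonoidHom.snd _ _).comp (MonoidHom.snd _ _)
  have det1 : ∀ m ∈ H.toSubmonoid, ∀ m' ∈ H.toSubmonoid, p2 m = p2 m' → p3 m = p3 m' →
      p1 m = p1 m' := by
    rintro ⟨a, b, c⟩ hm ⟨a', b', c'⟩ hm' (rfl : b = b') (rfl : c = c')
    exact (h1 b c).unique hm hm'
  have det2 : ∀ m ∈ H.toSubmonoid, ∀ m' ∈ H.toSubmonoid, p1 m = p1 m' → p3 m = p3 m' →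
      p2 m = p2 m' := by
    rintro ⟨a, b, c⟩ hm ⟨a', b', c'⟩ hm' (rfl : a = a') (rfl : c = c')
    exact (h2 a c).unique hm hm'
  have det3 : ∀ m ∈ H.toSubmonoid, ∀ m' ∈ H.toSubmonoid, p1 m = p1 m' → p2 m = p2 m' →
      p3 m = p3 m' := by
    rintro ⟨a, b, c⟩ hm ⟨a', b', c'⟩ hm' (rfl : a = a') (rfl : b = b')
    exact (h3 a b).unique hm hm'
  refine ⟨fun x y => ?_, fun x y => ?_, fun x y => ?_⟩
  · obtain ⟨b, hb, -⟩ := h2 x 1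
    obtain ⟨c, hc, -⟩ := h3 y 1
    exact H.toSubmonoid.commute_of_determined p1 p2 p3 det1 hb hc rfl rfl
  · obtain ⟨a, ha, -⟩ := h1 x 1
    obtain ⟨c, hc, -⟩ := h3 1 y
    exact H.toSubmonoid.commute_of_determined p2 p1 p3 det2 ha hc rfl rfl
  · obtain ⟨a, ha, -⟩ := h1 1 x
    obtain ⟨b, hb, -⟩ := h2 1 y
    exact H.toSubmonoid.commute_of_determined p3 p1 p2 det3 ha hb rfl rfl

/-- If `H` is a strict almost-direct product of finite groups `G1, G2, G3`,
then each of `G1`, `G2` and `G3` is commutative. -/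
theorem strict_almost_direct_product_factors_comm
    {G1 G2 G3 : Type*} [Group G1] [Group G2] [Group G3]
    [Finite G1] [Finite G2] [Finite G3]
    (H : Subgroup (G1 × G2 × G3))
    (hne : H ≠ ⊤)
    (h1 : ∀ (b : G2) (c : G3), ∃! a : G1, ((a, b, c) : G1 × G2 × G3) ∈ H)
    (h2 : ∀ (a : G1) (c : G3), ∃! b : G2, ((a, b, c) : G1 × G2 × G3) ∈ H)
    (h3 : ∀ (a : G1) (b : G2), ∃! c : G3, ((a, b, c) : G1 × G2 × G3) ∈ H) :
    (∀ x y : G1, x * y = y * x) ∧ (∀ x y : G2, x * y = y * x) ∧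
      (∀ x y : G3, x * y = y * x) :=
  strict_almost_direct_product_factors_comm_general H h1 h2 h3
end

section
/- Let H ≤ G1 × G2 × G3 be an almost-direct product, N1 = {π1 : (π1,1,1) ∈ H} and similarly N2, N3, and let [H] denote the image of H in (G1/N1) × (G2/N2) × (G3/N3). Then [H] is a strict almost-direct product of G1/N1, G2/N2, G3/N3: for each coordinate, any pair of elements of the other two quotient groups extends to a triple in [H] with a unique element in the remaining coordinate, and [H] is a proper subgroup of the full product of quotients. -/
/-!
The kernel of `G1 × G2 × G3 → (G1/N1) × (G2/N2) × (G3/N3)` is `N1 × N2 × N3`, which lies in `H`,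
so `H` is the full preimage of its image `[H]`. Properness of `H` therefore passes to `[H]`, and an
element `(a, 1, 1)` of `[H]` lifts to some `(x, 1, 1) ∈ H`, i.e. `x ∈ N1` and `a = 1`. Since `[H]`
is a subgroup, this triviality of its coordinate fibres is exactly the uniqueness of extensions.
-/

namespace Subgroup

variable {A B C : Type*} [Group A] [Group B] [Group C] (K : Subgroup (A × B × C))

theorem existsUnique_fst_of_forall_fst_eq_one (hex : ∀ b c, ∃ a, (a, b, c) ∈ K)
    (htriv : ∀ a, (a, (1 : B), (1 : C)) ∈ K → a = 1) (b : B) (c : C) :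
    ∃! a, (a, b, c) ∈ K := by
  obtain ⟨a, ha⟩ := hex b c
  refine ⟨a, ha, fun a' ha' => ?_⟩
  have hdiv : (a⁻¹ * a', (1 : B), (1 : C)) ∈ K := by
    simpa using K.mul_mem (K.inv_mem ha) ha'
  exact (inv_mul_eq_one.1 (htriv _ hdiv)).symm

theorem existsUnique_snd_of_forall_snd_eq_one (hex : ∀ a c, ∃ b, (a, b, c) ∈ K)
    (htriv : ∀ b, ((1 : A), b, (1 : C)) ∈ K → b = 1) (a : A) (c : C) :
    ∃! b, (a, b, c) ∈ K := by
  obtain ⟨b, hb⟩ := hex a c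
  refine ⟨b, hb, fun b' hb' => ?_⟩
  have hdiv : ((1 : A), b⁻¹ * b', (1 : C)) ∈ K := by
    simpa using K.mul_mem (K.inv_mem hb) hb'
  exact (inv_mul_eq_one.1 (htriv _ hdiv)).symm

theorem existsUnique_thd_of_forall_thd_eq_one (hex : ∀ a b, ∃ c, (a, b, c) ∈ K)
    (htriv : ∀ c, ((1 : A), (1 : B), c) ∈ K → c = 1) (a : A) (b : B) :
    ∃! c, (a, b, c) ∈ K := by
  obtain ⟨c, hc⟩ := hex a b
  refine ⟨c, hc, fun c' hc' => ?_⟩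
  have hdiv : ((1 : A), (1 : B), c⁻¹ * c') ∈ K := by
    simpa using K.mul_mem (K.inv_mem hc) hc'
  exact (inv_mul_eq_one.1 (htriv _ hdiv)).symm

theorem prod_le_of_forall_mem {N1 : Subgroup A} {N2 : Subgroup B} {N3 : Subgroup C}
    (hN1 : ∀ x ∈ N1, ((x, 1, 1) : A × B × C) ∈ K)
    (hN2 : ∀ y ∈ N2, ((1, y, 1) : A × B × C) ∈ K)
    (hN3 : ∀ z ∈ N3, ((1, 1, z) : A × B × C) ∈ K) :
    N1.prod (N2.prod N3) ≤ K := by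
  rintro ⟨x, y, z⟩ ⟨hx, hy, hz⟩
  simpa using K.mul_mem (K.mul_mem (hN1 x hx) (hN2 y hy)) (hN3 z hz)

end Subgroup

namespace QuotientGroup

variable {G1 G2 G3 : Type*} [Group G1] [Group G2] [Group G3]
  {H : Subgroup (G1 × G2 × G3)} (N1 : Subgroup G1) (N2 : Subgroup G2) (N3 : Subgroup G3)
  [N1.Normal] [N2.Normal] [N3.Normal]

def prodMk' : (G1 × G2 × G3) →* (G1 ⧸ N1) × (G2 ⧸ N2) × (G3 ⧸ N3) :=
  (mk' N1).prodMap ((mk' N2).prodMap (mk' N3))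

@[simp]
theorem prodMk'_apply (x : G1) (y : G2) (z : G3) :
    prodMk' N1 N2 N3 (x, y, z) = ((x : G1 ⧸ N1), (y : G2 ⧸ N2), (z : G3 ⧸ N3)) :=
  rfl

theorem ker_prodMk' : (prodMk' N1 N2 N3).ker = N1.prod (N2.prod N3) := by
  simp [prodMk', MonoidHom.ker_prodMap]

variable {N1 N2 N3}

theorem comap_map_prodMk' (hle : N1.prod (N2.prod N3) ≤ H) :
    (H.map (prodMk' N1 N2 N3)).comap (prodMk' N1 N2 N3) = H :=
  Subgroup.comap_map_eq_self (ker_prodMk' N1 N2 N3 ▸ hle)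

theorem prodMk'_mem_map_iff (hle : N1.prod (N2.prod N3) ≤ H) (x : G1 × G2 × G3) :
    prodMk' N1 N2 N3 x ∈ H.map (prodMk' N1 N2 N3) ↔ x ∈ H := by
  rw [← Subgroup.mem_comap, comap_map_prodMk' hle]

theorem existsUnique_fst_mem_map (hle : N1.prod (N2.prod N3) ≤ H)
    (hex : ∀ (y : G2) (z : G3), ∃ x : G1, (x, y, z) ∈ H)
    (hN1 : ∀ x : G1, ((x, 1, 1) : G1 × G2 × G3) ∈ H → x ∈ N1) (b : G2 ⧸ N2) (c : G3 ⧸ N3) :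
    ∃! a, (a, b, c) ∈ H.map (prodMk' N1 N2 N3) := by
  refine Subgroup.existsUnique_fst_of_forall_fst_eq_one _ (fun b c => ?_) (fun a ha => ?_) b c
  · obtain ⟨y, rfl⟩ := mk_surjective b
    obtain ⟨z, rfl⟩ := mk_surjective c
    obtain ⟨x, hx⟩ := hex y z
    exact ⟨x, _, hx, rfl⟩
  · obtain ⟨x, rfl⟩ := mk_surjective a
    exact (eq_one_iff x).2 (hN1 x ((prodMk'_mem_map_iff hle _).1 (by simpa using ha)))

theorem existsUnique_snd_mem_map (hle : N1.prod (N2.prod N3) ≤ H)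
    (hex : ∀ (x : G1) (z : G3), ∃ y : G2, (x, y, z) ∈ H)
    (hN2 : ∀ y : G2, ((1, y, 1) : G1 × G2 × G3) ∈ H → y ∈ N2) (a : G1 ⧸ N1) (c : G3 ⧸ N3) :
    ∃! b, (a, b, c) ∈ H.map (prodMk' N1 N2 N3) := by
  refine Subgroup.existsUnique_snd_of_forall_snd_eq_one _ (fun a c => ?_) (fun b hb => ?_) a c
  · obtain ⟨x, rfl⟩ := mk_surjective a
    obtain ⟨z, rfl⟩ := mk_surjective c
    obtain ⟨y, hy⟩ := hex x z
    exact ⟨y, _, hy, rfl⟩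
  · obtain ⟨y, rfl⟩ := mk_surjective b
    exact (eq_one_iff y).2 (hN2 y ((prodMk'_mem_map_iff hle _).1 (by simpa using hb)))

theorem existsUnique_thd_mem_map (hle : N1.prod (N2.prod N3) ≤ H)
    (hex : ∀ (x : G1) (y : G2), ∃ z : G3, (x, y, z) ∈ H)
    (hN3 : ∀ z : G3, ((1, 1, z) : G1 × G2 × G3) ∈ H → z ∈ N3) (a : G1 ⧸ N1) (b : G2 ⧸ N2) :
    ∃! c, (a, b, c) ∈ H.map (prodMk' N1 N2 N3) := by
  refine Subgroup.existsUnique_thd_of_forall_thd_eq_one _ (fun a b => ?_) (fun c hc => ?_) a b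
  · obtain ⟨x, rfl⟩ := mk_surjective a
    obtain ⟨y, rfl⟩ := mk_surjective b
    obtain ⟨z, hz⟩ := hex x y
    exact ⟨z, _, hz, rfl⟩
  · obtain ⟨z, rfl⟩ := mk_surjective c
    exact (eq_one_iff z).2 (hN3 z ((prodMk'_mem_map_iff hle _).1 (by simpa using hc)))

end QuotientGroup

open QuotientGroup in
theorem quotient_is_strict_almost_direct_product_general
    {G1 G2 G3 : Type*} [Group G1] [Group G2] [Group G3]
    (H : Subgroup (G1 × G2 × G3))
    (hne : H ≠ ⊤)
    (h1 : ∀ (b : G2) (c : G3), ∃ a : G1, ((a, b, c) : G1 × G2 × G3) ∈ H)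
    (h2 : ∀ (a : G1) (c : G3), ∃ b : G2, ((a, b, c) : G1 × G2 × G3) ∈ H)
    (h3 : ∀ (a : G1) (b : G2), ∃ c : G3, ((a, b, c) : G1 × G2 × G3) ∈ H)
    (N1 : Subgroup G1) (N2 : Subgroup G2) (N3 : Subgroup G3)
    [N1.Normal] [N2.Normal] [N3.Normal]
    (hN1 : ∀ x : G1, x ∈ N1 ↔ ((x, 1, 1) : G1 × G2 × G3) ∈ H)
    (hN2 : ∀ y : G2, y ∈ N2 ↔ ((1, y, 1) : G1 × G2 × G3) ∈ H)
    (hN3 : ∀ z : G3, z ∈ N3 ↔ ((1, 1, z) : G1 × G2 × G3) ∈ H) :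
    let φ : (G1 × G2 × G3) →* (G1 ⧸ N1) × (G2 ⧸ N2) × (G3 ⧸ N3) :=
      (QuotientGroup.mk' N1).prodMap
        ((QuotientGroup.mk' N2).prodMap (QuotientGroup.mk' N3))
    let K : Subgroup ((G1 ⧸ N1) × (G2 ⧸ N2) × (G3 ⧸ N3)) := H.map φ
    K ≠ ⊤ ∧
      (∀ (b : G2 ⧸ N2) (c : G3 ⧸ N3), ∃! a : G1 ⧸ N1, (a, b, c) ∈ K) ∧
      (∀ (a : G1 ⧸ N1) (c : G3 ⧸ N3), ∃! b : G2 ⧸ N2, (a, b, c) ∈ K) ∧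
      (∀ (a : G1 ⧸ N1) (b : G2 ⧸ N2), ∃! c : G3 ⧸ N3, (a, b, c) ∈ K) := by
  intro φ K
  have hle : N1.prod (N2.prod N3) ≤ H :=
    Subgroup.prod_le_of_forall_mem H (fun x => (hN1 x).1) (fun y => (hN2 y).1) (fun z => (hN3 z).1)
  refine ⟨fun hK => hne ?_, existsUnique_fst_mem_map hle h1 (fun x => (hN1 x).2),
    existsUnique_snd_mem_map hle h2 (fun y => (hN2 y).2),
    existsUnique_thd_mem_map hle h3 (fun z => (hN3 z).2)⟩
  rw [← comap_map_prodMk' hle]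
  exact (congrArg (Subgroup.comap φ) hK).trans (Subgroup.comap_top φ)

/-- The image `[H]` of an almost-direct product `H ≤ G1 × G2 × G3` in the
product of quotients `(G1/N1) × (G2/N2) × (G3/N3)` is a *strict* almost-direct
product: it is a proper subgroup, and each pair of coordinates extends uniquely. -/
theorem quotient_is_strict_almost_direct_product
    {G1 G2 G3 : Type*} [Group G1] [Group G2] [Group G3]
    [Finite G1] [Finite G2] [Finite G3]
    (H : Subgroup (G1 × G2 × G3))
    (hne : H ≠ ⊤)
    (h1 : ∀ (b : G2) (c : G3), ∃ a : G1, ((a, b, c) : G1 × G2 × G3) ∈ H)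
    (h2 : ∀ (a : G1) (c : G3), ∃ b : G2, ((a, b, c) : G1 × G2 × G3) ∈ H)
    (h3 : ∀ (a : G1) (b : G2), ∃ c : G3, ((a, b, c) : G1 × G2 × G3) ∈ H)
    (N1 : Subgroup G1) (N2 : Subgroup G2) (N3 : Subgroup G3)
    [N1.Normal] [N2.Normal] [N3.Normal]
    (hN1 : ∀ x : G1, x ∈ N1 ↔ ((x, 1, 1) : G1 × G2 × G3) ∈ H)
    (hN2 : ∀ y : G2, y ∈ N2 ↔ ((1, y, 1) : G1 × G2 × G3) ∈ H)
    (hN3 : ∀ z : G3, z ∈ N3 ↔ ((1, 1, z) : G1 × G2 × G3) ∈ H) :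
    let φ : (G1 × G2 × G3) →* (G1 ⧸ N1) × (G2 ⧸ N2) × (G3 ⧸ N3) :=
      (QuotientGroup.mk' N1).prodMap
        ((QuotientGroup.mk' N2).prodMap (QuotientGroup.mk' N3))
    let K : Subgroup ((G1 ⧸ N1) × (G2 ⧸ N2) × (G3 ⧸ N3)) := H.map φ
    K ≠ ⊤ ∧
      (∀ (b : G2 ⧸ N2) (c : G3 ⧸ N3), ∃! a : G1 ⧸ N1, (a, b, c) ∈ K) ∧
      (∀ (a : G1 ⧸ N1) (c : G3 ⧸ N3), ∃! b : G2 ⧸ N2, (a, b, c) ∈ K) ∧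
      (∀ (a : G1 ⧸ N1) (b : G2 ⧸ N2), ∃! c : G3 ⧸ N3, (a, b, c) ∈ K) :=
  quotient_is_strict_almost_direct_product_general H hne h1 h2 h3 N1 N2 N3 hN1 hN2 hN3
end

section
/- Let H ≤ G1 × G2 × G3 be a subgroup such that there exists (π1, π2, π3) ∉ H with: (π1, π2, π3) extendable in each single coordinate, i.e., there exist τ ∈ G1 with (τ, π2, π3) ∈ H, τ ∈ G2 with (π1, τ, π3) ∈ H, and τ ∈ G3 with (π1, π2, τ) ∈ H. Define S1 = {τ1 ∈ G1 : (∃τ, (τ1, τ, 1) ∈ H) ∧ (∃τ, (τ1, 1, τ) ∈ H)} and analogously S2, S3, and R = H ∩ (S1 × S2 × S3). Then S1, S2, S3 are subgroups, and R is an almost-direct product of S1, S2, S3, i.e., R ≠ S1 × S2 × S3 and for each coordinate, any pair of elements of the other two Si's extends to a triple in R. -/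
/-!
Let `K_i ≤ H` be the elements of `H` whose `i`-th coordinate is trivial; then `S_i` is the
intersection of the projections of the two `K_j`, `j ≠ i`, to the `i`-th coordinate, hence a
subgroup. If two coordinates of `x ∈ H` lie in their `S`'s, dividing `x` by suitable elements of
the `K_j` shows that the third one does too; multiplying `(u, b, 1)` and `(v, 1, c)` in `H` then
extends any `(b, c) ∈ S₂ × S₃`, and likewise for the other pairs. Finally, dividing the
single-coordinate corrections of the anomaly pairwise shows `a = τ π₁⁻¹ ∈ S₁`, where
`(τ, π₂, π₃) ∈ H`; but `(a, 1, 1) ∉ H`, since otherwise `(π₁, π₂, π₃) = (a, 1, 1)⁻¹ (τ, π₂, π₃)`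
would lie in `H`.
-/

namespace Subgroup

variable {G1 G2 G3 : Type*} [Group G1] [Group G2] [Group G3]

def proj₁ : G1 × G2 × G3 →* G1 := MonoidHom.fst G1 (G2 × G3)

def proj₂ : G1 × G2 × G3 →* G2 := (MonoidHom.fst G2 G3).comp (MonoidHom.snd G1 (G2 × G3))

def proj₃ : G1 × G2 × G3 →* G3 := (MonoidHom.snd G2 G3).comp (MonoidHom.snd G1 (G2 × G3))

variable (H : Subgroup (G1 × G2 × G3))

/- `copy` makes membership definitionally the explicit condition, while the subgroup it copies
shows the closure properties. -/
def factor₁ : Subgroup G1 :=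
  ((H ⊓ proj₃.ker).map proj₁ ⊓ (H ⊓ proj₂.ker).map proj₁).copy
    {t | (∃ τ : G2, ((t, τ, 1) : G1 × G2 × G3) ∈ H) ∧ (∃ τ : G3, ((t, 1, τ) : G1 × G2 × G3) ∈ H)}
    (by ext; simp [proj₁, proj₂, proj₃])

def factor₂ : Subgroup G2 :=
  ((H ⊓ proj₃.ker).map proj₂ ⊓ (H ⊓ proj₁.ker).map proj₂).copy
    {t | (∃ τ : G1, ((τ, t, 1) : G1 × G2 × G3) ∈ H) ∧ (∃ τ : G3, ((1, t, τ) : G1 × G2 × G3) ∈ H)}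
    (by ext; simp [proj₁, proj₂, proj₃, mem_prod])

def factor₃ : Subgroup G3 :=
  ((H ⊓ proj₂.ker).map proj₃ ⊓ (H ⊓ proj₁.ker).map proj₃).copy
    {t | (∃ τ : G1, ((τ, 1, t) : G1 × G2 × G3) ∈ H) ∧ (∃ τ : G2, ((1, τ, t) : G1 × G2 × G3) ∈ H)}
    (by ext; simp [proj₁, proj₂, proj₃, mem_prod])

variable {H} {a : G1} {b : G2} {c : G3}

theorem mem_factor₁_of_mem (h : (a, b, c) ∈ H) (hb : b ∈ H.factor₂) (hc : c ∈ H.factor₃) :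
    a ∈ H.factor₁ := by
  obtain ⟨_, ⟨τ, hτ⟩⟩ := hb
  obtain ⟨_, ⟨σ, hσ⟩⟩ := hc
  exact ⟨⟨b * σ⁻¹, by simpa using H.mul_mem h (H.inv_mem hσ)⟩,
    ⟨c * τ⁻¹, by simpa using H.mul_mem h (H.inv_mem hτ)⟩⟩

theorem mem_factor₂_of_mem (h : (a, b, c) ∈ H) (ha : a ∈ H.factor₁) (hc : c ∈ H.factor₃) :
    b ∈ H.factor₂ := by
  obtain ⟨_, ⟨τ, hτ⟩⟩ := ha
  obtain ⟨⟨σ, hσ⟩, _⟩ := hc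
  exact ⟨⟨a * σ⁻¹, by simpa using H.mul_mem h (H.inv_mem hσ)⟩,
    ⟨τ⁻¹ * c, by simpa using H.mul_mem (H.inv_mem hτ) h⟩⟩

theorem mem_factor₃_of_mem (h : (a, b, c) ∈ H) (ha : a ∈ H.factor₁) (hb : b ∈ H.factor₂) :
    c ∈ H.factor₃ := by
  obtain ⟨⟨τ, hτ⟩, _⟩ := ha
  obtain ⟨⟨σ, hσ⟩, _⟩ := hb
  exact ⟨⟨a * σ⁻¹, by simpa using H.mul_mem h (H.inv_mem hσ)⟩,
    ⟨τ⁻¹ * b, by simpa using H.mul_mem (H.inv_mem hτ) h⟩⟩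

theorem exists_mem_of_mem_factor₂_of_mem_factor₃ (hb : b ∈ H.factor₂) (hc : c ∈ H.factor₃) :
    ∃ a : G1, (a, b, c) ∈ H := by
  obtain ⟨⟨u, hu⟩, _⟩ := hb
  obtain ⟨⟨v, hv⟩, _⟩ := hc
  exact ⟨u * v, by simpa using H.mul_mem hu hv⟩

theorem exists_mem_of_mem_factor₁_of_mem_factor₃ (ha : a ∈ H.factor₁) (hc : c ∈ H.factor₃) :
    ∃ b : G2, (a, b, c) ∈ H := by
  obtain ⟨⟨u, hu⟩, _⟩ := ha
  obtain ⟨_, ⟨v, hv⟩⟩ := hc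
  exact ⟨u * v, by simpa using H.mul_mem hu hv⟩

theorem exists_mem_of_mem_factor₁_of_mem_factor₂ (ha : a ∈ H.factor₁) (hb : b ∈ H.factor₂) :
    ∃ c : G3, (a, b, c) ∈ H := by
  obtain ⟨_, ⟨u, hu⟩⟩ := ha
  obtain ⟨_, ⟨v, hv⟩⟩ := hb
  exact ⟨u * v, by simpa using H.mul_mem hu hv⟩

theorem exists_mem_factor₁_not_mem_of_anomaly {π1 : G1} {π2 : G2} {π3 : G3}
    (hnot : ((π1, π2, π3) : G1 × G2 × G3) ∉ H)
    (e1 : ∃ τ : G1, ((τ, π2, π3) : G1 × G2 × G3) ∈ H)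
    (e2 : ∃ τ : G2, ((π1, τ, π3) : G1 × G2 × G3) ∈ H)
    (e3 : ∃ τ : G3, ((π1, π2, τ) : G1 × G2 × G3) ∈ H) :
    ∃ a ∈ H.factor₁, ((a, 1, 1) : G1 × G2 × G3) ∉ H := by
  obtain ⟨τ, hτ⟩ := e1
  obtain ⟨σ, hσ⟩ := e2
  obtain ⟨ρ, hρ⟩ := e3
  refine ⟨τ * π1⁻¹, ⟨⟨π2 * σ⁻¹, by simpa using H.mul_mem hτ (H.inv_mem hσ)⟩,
    ⟨π3 * ρ⁻¹, by simpa using H.mul_mem hτ (H.inv_mem hρ)⟩⟩, fun h ↦ hnot ?_⟩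
  simpa using H.mul_mem (H.inv_mem h) hτ

end Subgroup

theorem anomaly_gives_almost_direct_product_general
    {G1 G2 G3 : Type*} [Group G1] [Group G2] [Group G3]
    (H : Subgroup (G1 × G2 × G3)) (π1 : G1) (π2 : G2) (π3 : G3)
    (hnot : ((π1, π2, π3) : G1 × G2 × G3) ∉ H)
    (e1 : ∃ τ : G1, ((τ, π2, π3) : G1 × G2 × G3) ∈ H)
    (e2 : ∃ τ : G2, ((π1, τ, π3) : G1 × G2 × G3) ∈ H)
    (e3 : ∃ τ : G3, ((π1, π2, τ) : G1 × G2 × G3) ∈ H) :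
    let S1 : Set G1 := {t | (∃ τ : G2, ((t, τ, 1) : G1 × G2 × G3) ∈ H) ∧
      (∃ τ : G3, ((t, 1, τ) : G1 × G2 × G3) ∈ H)}
    let S2 : Set G2 := {t | (∃ τ : G1, ((τ, t, 1) : G1 × G2 × G3) ∈ H) ∧
      (∃ τ : G3, ((1, t, τ) : G1 × G2 × G3) ∈ H)}
    let S3 : Set G3 := {t | (∃ τ : G1, ((τ, 1, t) : G1 × G2 × G3) ∈ H) ∧
      (∃ τ : G2, ((1, τ, t) : G1 × G2 × G3) ∈ H)}
    let R : Set (G1 × G2 × G3) :=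
      {x | x ∈ H ∧ x.1 ∈ S1 ∧ x.2.1 ∈ S2 ∧ x.2.2 ∈ S3}
    (∃ K : Subgroup G1, (K : Set G1) = S1) ∧
    (∃ K : Subgroup G2, (K : Set G2) = S2) ∧
    (∃ K : Subgroup G3, (K : Set G3) = S3) ∧
    R ≠ {x : G1 × G2 × G3 | x.1 ∈ S1 ∧ x.2.1 ∈ S2 ∧ x.2.2 ∈ S3} ∧
    (∀ b ∈ S2, ∀ c ∈ S3, ∃ a ∈ S1, ((a, b, c) : G1 × G2 × G3) ∈ R) ∧
    (∀ a ∈ S1, ∀ c ∈ S3, ∃ b ∈ S2, ((a, b, c) : G1 × G2 × G3) ∈ R) ∧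
    (∀ a ∈ S1, ∀ b ∈ S2, ∃ c ∈ S3, ((a, b, c) : G1 × G2 × G3) ∈ R) := by
  intro S1 S2 S3 R
  refine ⟨⟨H.factor₁, rfl⟩, ⟨H.factor₂, rfl⟩, ⟨H.factor₃, rfl⟩, ?_, ?_, ?_, ?_⟩
  · obtain ⟨a, ha, haH⟩ := H.exists_mem_factor₁_not_mem_of_anomaly hnot e1 e2 e3
    intro hR
    have hmem : ((a, 1, 1) : G1 × G2 × G3) ∈ R := hR ▸ ⟨ha, H.factor₂.one_mem, H.factor₃.one_mem⟩
    exact haH hmem.1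
  · intro b hb c hc
    obtain ⟨a, h⟩ := Subgroup.exists_mem_of_mem_factor₂_of_mem_factor₃ hb hc
    have ha := Subgroup.mem_factor₁_of_mem h hb hc
    exact ⟨a, ha, h, ha, hb, hc⟩
  · intro a ha c hc
    obtain ⟨b, h⟩ := Subgroup.exists_mem_of_mem_factor₁_of_mem_factor₃ ha hc
    have hb := Subgroup.mem_factor₂_of_mem h ha hc
    exact ⟨b, hb, h, ha, hb, hc⟩
  · intro a ha b hb
    obtain ⟨c, h⟩ := Subgroup.exists_mem_of_mem_factor₁_of_mem_factor₂ ha hb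
    have hc := Subgroup.mem_factor₃_of_mem h ha hb
    exact ⟨c, hc, h, ha, hb, hc⟩

/-- Proposition 1 (construction): given a subgroup `H ≤ G1 × G2 × G3` and a
(2,3)-anomaly triple `(π1, π2, π3) ∉ H` that is correctable in each single
coordinate, the sets `S1, S2, S3` are subgroups and
`R = H ∩ (S1 × S2 × S3)` is an almost-direct product of `S1, S2, S3`. -/
theorem anomaly_gives_almost_direct_product
    {G1 G2 G3 : Type*} [Group G1] [Group G2] [Group G3]
    [Finite G1] [Finite G2] [Finite G3]
    (H : Subgroup (G1 × G2 × G3)) (π1 : G1) (π2 : G2) (π3 : G3)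
    (hnot : ((π1, π2, π3) : G1 × G2 × G3) ∉ H)
    (e1 : ∃ τ : G1, ((τ, π2, π3) : G1 × G2 × G3) ∈ H)
    (e2 : ∃ τ : G2, ((π1, τ, π3) : G1 × G2 × G3) ∈ H)
    (e3 : ∃ τ : G3, ((π1, π2, τ) : G1 × G2 × G3) ∈ H) :
    let S1 : Set G1 := {t | (∃ τ : G2, ((t, τ, 1) : G1 × G2 × G3) ∈ H) ∧
      (∃ τ : G3, ((t, 1, τ) : G1 × G2 × G3) ∈ H)}
    let S2 : Set G2 := {t | (∃ τ : G1, ((τ, t, 1) : G1 × G2 × G3) ∈ H) ∧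
      (∃ τ : G3, ((1, t, τ) : G1 × G2 × G3) ∈ H)}
    let S3 : Set G3 := {t | (∃ τ : G1, ((τ, 1, t) : G1 × G2 × G3) ∈ H) ∧
      (∃ τ : G2, ((1, τ, t) : G1 × G2 × G3) ∈ H)}
    let R : Set (G1 × G2 × G3) :=
      {x | x ∈ H ∧ x.1 ∈ S1 ∧ x.2.1 ∈ S2 ∧ x.2.2 ∈ S3}
    (∃ K : Subgroup G1, (K : Set G1) = S1) ∧
    (∃ K : Subgroup G2, (K : Set G2) = S2) ∧
    (∃ K : Subgroup G3, (K : Set G3) = S3) ∧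
    R ≠ {x : G1 × G2 × G3 | x.1 ∈ S1 ∧ x.2.1 ∈ S2 ∧ x.2.2 ∈ S3} ∧
    (∀ b ∈ S2, ∀ c ∈ S3, ∃ a ∈ S1, ((a, b, c) : G1 × G2 × G3) ∈ R) ∧
    (∀ a ∈ S1, ∀ c ∈ S3, ∃ b ∈ S2, ((a, b, c) : G1 × G2 × G3) ∈ R) ∧
    (∀ a ∈ S1, ∀ b ∈ S2, ∃ c ∈ S3, ((a, b, c) : G1 × G2 × G3) ∈ R) :=
  anomaly_gives_almost_direct_product_general H π1 π2 π3 hnot e1 e2 e3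
end

section
/- Let H ≤ G1 × G2 × G3 be a subgroup, S1, S2, S3 defined as in Proposition 1 (S1 = {τ1 : ∃τ, H(τ1, τ, 1) and ∃τ, H(τ1, 1, τ)}, etc.), and suppose (π1, π2, π3) ∉ H but each coordinate of (π1, π2, π3) can be corrected inside H (i.e., ∃τ with (τ, π2, π3) ∈ H, and similarly for the other coordinates). Then with τ1 = τ⁻¹π1 (for the witness τ with (τ, π2, π3) ∈ H), we have τ1 ∈ S1 and (τ1, 1, 1) ∉ H; in particular H ∩ (S1 × S2 × S3) is a proper subgroup of S1 × S2 × S3. -/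
/-!
Dividing `(τ, π2, π3) ∈ H` into the two other corrections `(π1, τ', π3)` and `(π1, π2, τ'')`
kills the second, respectively third, coordinate, so `τ⁻¹ π1` lies in `S1`. If `(τ⁻¹ π1, 1, 1)`
were in `H`, multiplying it by `(τ, π2, π3)` would put `(π1, π2, π3)` in `H`. Since `1 ∈ S2`
and `1 ∈ S3`, the triple `(τ⁻¹ π1, 1, 1)` then witnesses that `H ∩ (S1 × S2 × S3)` is smaller
than `S1 × S2 × S3`.
-/

section Triple

variable {G1 G2 G3 : Type*} [Group G1] [Group G2] [Group G3] {H : Subgroup (G1 × G2 × G3)}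
  {a1 b1 : G1} {a2 b2 : G2} {a3 b3 : G3}

theorem Subgroup.triple_inv_mul_mem (ha : ((a1, a2, a3) : G1 × G2 × G3) ∈ H)
    (hb : ((b1, b2, b3) : G1 × G2 × G3) ∈ H) :
    ((a1⁻¹ * b1, a2⁻¹ * b2, a3⁻¹ * b3) : G1 × G2 × G3) ∈ H :=
  H.mul_mem (H.inv_mem ha) hb

theorem Subgroup.triple_mul_mem (ha : ((a1, a2, a3) : G1 × G2 × G3) ∈ H)
    (hb : ((b1, b2, b3) : G1 × G2 × G3) ∈ H) :
    ((a1 * b1, a2 * b2, a3 * b3) : G1 × G2 × G3) ∈ H :=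
  H.mul_mem ha hb

end Triple

theorem Set.setOf_mem_and_ne_setOf {α : Type*} {s : Set α} {p : α → Prop} {x : α}
    (hx : p x) (hxs : x ∉ s) : {y | y ∈ s ∧ p y} ≠ {y | p y} := fun h =>
  hxs (h.symm ▸ hx : x ∈ {y | y ∈ s ∧ p y}).1

/-- Key step for condition (1) of the almost-direct product: with
`(π1, π2, π3) ∉ H` correctable in each coordinate and `(τ, π2, π3) ∈ H`,
the element `τ1 = τ⁻¹ * π1` lies in `S1` but `(τ1, 1, 1) ∉ H`; in particular
`H ∩ (S1 × S2 × S3)` is a proper subgroup of `S1 × S2 × S3`. -/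
theorem proper_subgroup_step
    {G1 G2 G3 : Type*} [Group G1] [Group G2] [Group G3]
    (H : Subgroup (G1 × G2 × G3)) (π1 : G1) (π2 : G2) (π3 : G3) (τ : G1)
    (hnot : ((π1, π2, π3) : G1 × G2 × G3) ∉ H)
    (hτ : ((τ, π2, π3) : G1 × G2 × G3) ∈ H)
    (e2 : ∃ τ' : G2, ((π1, τ', π3) : G1 × G2 × G3) ∈ H)
    (e3 : ∃ τ'' : G3, ((π1, π2, τ'') : G1 × G2 × G3) ∈ H) :
    let S1 : Set G1 := {t | (∃ σ : G2, ((t, σ, 1) : G1 × G2 × G3) ∈ H) ∧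
      (∃ σ : G3, ((t, 1, σ) : G1 × G2 × G3) ∈ H)}
    let S2 : Set G2 := {t | (∃ σ : G1, ((σ, t, 1) : G1 × G2 × G3) ∈ H) ∧
      (∃ σ : G3, ((1, t, σ) : G1 × G2 × G3) ∈ H)}
    let S3 : Set G3 := {t | (∃ σ : G1, ((σ, 1, t) : G1 × G2 × G3) ∈ H) ∧
      (∃ σ : G2, ((1, σ, t) : G1 × G2 × G3) ∈ H)}
    let τ1 : G1 := τ⁻¹ * π1
    τ1 ∈ S1 ∧ ((τ1, 1, 1) : G1 × G2 × G3) ∉ H ∧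
      ({x : G1 × G2 × G3 | x ∈ H ∧ x.1 ∈ S1 ∧ x.2.1 ∈ S2 ∧ x.2.2 ∈ S3}
        ≠ {x : G1 × G2 × G3 | x.1 ∈ S1 ∧ x.2.1 ∈ S2 ∧ x.2.2 ∈ S3}) := by
  intro S1 S2 S3 τ1
  obtain ⟨τ', hτ'⟩ := e2
  obtain ⟨τ'', hτ''⟩ := e3
  have hτ1 : τ1 ∈ S1 := by
    constructor
    · exact ⟨π2⁻¹ * τ', by simpa using H.triple_inv_mul_mem hτ hτ'⟩
    · exact ⟨π3⁻¹ * τ'', by simpa using H.triple_inv_mul_mem hτ hτ''⟩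
  have hτ1_notMem : ((τ1, 1, 1) : G1 × G2 × G3) ∉ H := fun h =>
    hnot (by simpa [τ1] using H.triple_mul_mem hτ h)
  have h1S2 : (1 : G2) ∈ S2 := ⟨⟨1, H.one_mem⟩, ⟨1, H.one_mem⟩⟩
  have h1S3 : (1 : G3) ∈ S3 := ⟨⟨1, H.one_mem⟩, ⟨1, H.one_mem⟩⟩
  refine ⟨hτ1, hτ1_notMem, Set.setOf_mem_and_ne_setOf ?_ hτ1_notMem⟩
  exact ⟨hτ1, h1S2, h1S3⟩
end

section
/- Let I be a subgroup instance over a coset template admitting a (k, k+1)-anomaly h for some k ≥ 2. Fix a ∈ dom(h), let h̄ be a solution of I with h̄(a) = h(a) (which exists since h restricted to {a} extends to a solution), and define h'(x) = h(x)·h̄(x)⁻¹ on dom(h). Then the restriction of h' to dom(h)\{a} is a (k-1, k)-anomaly of the instance I' obtained from I by adding the unary constraint forcing a to the identity. In particular, if some subgroup instance admits a (k, k+1)-anomaly with k ≥ 2, then some subgroup instance admits a (k-1, k)-anomaly. -/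
section CosetCSP

variable {ι : Type} {G : ι → Type} [∀ x, Group (G x)]
variable {C : Type}

/-- A solution of a subgroup instance over a coset template: an assignment of a
group element to every instance element, satisfying every constraint (each
constraint requires the tuple of values at `v c` to lie in the subgroup `K c`). -/
def CosetSol (nar : C → ℕ) (v : ∀ c, Fin (nar c) → ι)
    (K : ∀ c, Subgroup (∀ i, G (v c i))) (g : ∀ x, G x) : Prop :=
  ∀ c, (fun i => g (v c i)) ∈ K c

/-- A partial solution with domain `D`: satisfies every constraint whose
elements all lie in `D`. -/
def CosetPartialSol (nar : C → ℕ) (v : ∀ c, Fin (nar c) → ι)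
    (K : ∀ c, Subgroup (∀ i, G (v c i))) (D : Finset ι) (h : ∀ x, G x) : Prop :=
  ∀ c, (∀ i, v c i ∈ D) → (fun i => h (v c i)) ∈ K c

/-- The partial solution with domain `D` extends to a solution. -/
def CosetExtends (nar : C → ℕ) (v : ∀ c, Fin (nar c) → ι)
    (K : ∀ c, Subgroup (∀ i, G (v c i))) (D : Finset ι) (h : ∀ x, G x) : Prop :=
  ∃ g : ∀ x, G x, CosetSol nar v K g ∧ ∀ x ∈ D, g x = h x

/-- A `(k, j)`-anomaly of the subgroup instance. -/
def CosetAnomaly (nar : C → ℕ) (v : ∀ c, Fin (nar c) → ι)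
    (K : ∀ c, Subgroup (∀ i, G (v c i))) (k j : ℕ) (D : Finset ι) (h : ∀ x, G x) : Prop :=
  CosetPartialSol nar v K D h ∧ D.card = j ∧ ¬ CosetExtends nar v K D h ∧
    ∀ X ⊆ D, X.card = k → CosetExtends nar v K X h

/-- Solutions of the instance `I'` obtained by adding the unary constraint
`1(a)` forcing `a` to the identity. -/
def CosetSol' (nar : C → ℕ) (v : ∀ c, Fin (nar c) → ι)
    (K : ∀ c, Subgroup (∀ i, G (v c i))) (a : ι) (g : ∀ x, G x) : Prop :=
  CosetSol nar v K g ∧ g a = 1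

/-- Partial solutions of the instance `I'`. -/
def CosetPartialSol' (nar : C → ℕ) (v : ∀ c, Fin (nar c) → ι)
    (K : ∀ c, Subgroup (∀ i, G (v c i))) (a : ι) (D : Finset ι) (h : ∀ x, G x) : Prop :=
  CosetPartialSol nar v K D h ∧ (a ∈ D → h a = 1)

/-- Extension to a solution, for the instance `I'`. -/
def CosetExtends' (nar : C → ℕ) (v : ∀ c, Fin (nar c) → ι)
    (K : ∀ c, Subgroup (∀ i, G (v c i))) (a : ι) (D : Finset ι) (h : ∀ x, G x) : Prop :=
  ∃ g : ∀ x, G x, CosetSol' nar v K a g ∧ ∀ x ∈ D, g x = h x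

/-- A `(k, j)`-anomaly of the instance `I'`. -/
def CosetAnomaly' (nar : C → ℕ) (v : ∀ c, Fin (nar c) → ι)
    (K : ∀ c, Subgroup (∀ i, G (v c i))) (a : ι) (k j : ℕ) (D : Finset ι)
    (h : ∀ x, G x) : Prop :=
  CosetPartialSol' nar v K a D h ∧ D.card = j ∧ ¬ CosetExtends' nar v K a D h ∧
    ∀ X ⊆ D, X.card = k → CosetExtends' nar v K a X h

end CosetCSP

/-!
Solutions of a subgroup instance form a subgroup of the group of pre-solutions, so
translating by a solution `s` with `s a = h a` is a bijection between solutions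
agreeing with `h` on `insert a X` and solutions of `I'` (where `a ↦ 1`) agreeing
with `h · s⁻¹` on `X`. Hence `h · s⁻¹` extends on `X` in `I'` exactly when `h`
extends on `insert a X` in `I`, and both defining properties of the anomaly move
down one level when `a` is removed from the domain.
-/

section CosetCSP

variable {ι : Type} {G : ι → Type} [∀ x, Group (G x)] {C : Type}
  {nar : C → ℕ} {v : ∀ c, Fin (nar c) → ι} {K : ∀ c, Subgroup (∀ i, G (v c i))}

variable (nar v K) in
def cosetSolSubgroup : Subgroup (∀ x, G x) where
  carrier := {g | CosetSol nar v K g}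
  one_mem' _ := one_mem _
  mul_mem' hg hg' c := mul_mem (hg c) (hg' c)
  inv_mem' hg c := inv_mem (hg c)

theorem mem_cosetSolSubgroup {g : ∀ x, G x} :
    g ∈ cosetSolSubgroup nar v K ↔ CosetSol nar v K g :=
  Iff.rfl

theorem CosetPartialSol.mono {D D' : Finset ι} {h : ∀ x, G x} (hD : D' ⊆ D)
    (hh : CosetPartialSol nar v K D h) : CosetPartialSol nar v K D' h :=
  fun c hc => hh c fun i => hD (hc i)

theorem CosetPartialSol.mul_inv_sol {D : Finset ι} {h s : ∀ x, G x}
    (hh : CosetPartialSol nar v K D h) (hs : CosetSol nar v K s) :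
    CosetPartialSol nar v K D (fun x => h x * (s x)⁻¹) :=
  fun c hc => mul_mem (hh c hc) (inv_mem (hs c))

theorem cosetExtends'_mul_inv_iff [DecidableEq ι] {a : ι} {X : Finset ι} {h s : ∀ x, G x}
    (hs : CosetSol nar v K s) (hsa : s a = h a) :
    CosetExtends' nar v K a X (fun x => h x * (s x)⁻¹) ↔
      CosetExtends nar v K (insert a X) h := by
  have hs : s ∈ cosetSolSubgroup nar v K := hs
  constructor
  · rintro ⟨g, ⟨hg, hga⟩, hgX⟩
    refine ⟨g * s, mul_mem (mem_cosetSolSubgroup.mpr hg) hs, ?_⟩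
    intro x hx
    rcases Finset.mem_insert.mp hx with rfl | hx
    · simp [hga, hsa]
    · simp [hgX x hx]
  · rintro ⟨g, hg, hgX⟩
    refine ⟨g * s⁻¹, ⟨mul_mem (mem_cosetSolSubgroup.mpr hg) (inv_mem hs), ?_⟩, ?_⟩
    · simp [hgX a (Finset.mem_insert_self a X), hsa]
    · intro x hx
      simp [hgX x (Finset.mem_insert_of_mem hx)]

end CosetCSP

theorem anomaly_descent_general
    {ι : Type} [DecidableEq ι] {G : ι → Type}
    [∀ x, Group (G x)]
    {C : Type} (nar : C → ℕ) (v : ∀ c, Fin (nar c) → ι)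
    (K : ∀ c, Subgroup (∀ i, G (v c i)))
    (k : ℕ) (hk : 2 ≤ k) (D : Finset ι) (h : ∀ x, G x)
    (hanom : CosetAnomaly nar v K k (k + 1) D h)
    (a : ι) (ha : a ∈ D)
    (hbar : ∀ x, G x) (hbarSol : CosetSol nar v K hbar) (hbara : hbar a = h a) :
    CosetAnomaly' nar v K a (k - 1) k (D.erase a) (fun x => h x * (hbar x)⁻¹) := by
  obtain ⟨hpartial, hcard, hnotExt, hsmallExt⟩ := hanom
  refine ⟨⟨(hpartial.mono (D.erase_subset a)).mul_inv_sol hbarSol,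
      fun haa => absurd haa (D.notMem_erase a)⟩, ?_, ?_, ?_⟩
  · rw [Finset.card_erase_of_mem ha, hcard, Nat.add_sub_cancel]
  · rwa [cosetExtends'_mul_inv_iff hbarSol hbara, Finset.insert_erase ha]
  · intro X hX hXcard
    have haX : a ∉ X := fun haX => D.notMem_erase a (hX haX)
    rw [cosetExtends'_mul_inv_iff hbarSol hbara]
    refine hsmallExt _ (Finset.insert_subset ha (hX.trans (D.erase_subset a))) ?_
    rw [Finset.card_insert_of_notMem haX, hXcard]
    omega

/-- Lemma: from a `(k, k+1)`-anomaly `h` of a subgroup instance (`k ≥ 2`),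
choosing `a ∈ dom h` and a solution `h̄` with `h̄ a = h a`, the map
`h' x = h x * (h̄ x)⁻¹` restricted to `dom h \ {a}` is a `(k-1, k)`-anomaly of
the subgroup instance `I'` obtained by adding the constraint `1(a)`. -/
theorem anomaly_descent
    {ι : Type} [DecidableEq ι] [Finite ι] {G : ι → Type}
    [∀ x, Group (G x)] [∀ x, Finite (G x)]
    {C : Type} (nar : C → ℕ) (v : ∀ c, Fin (nar c) → ι)
    (K : ∀ c, Subgroup (∀ i, G (v c i)))
    (k : ℕ) (hk : 2 ≤ k) (D : Finset ι) (h : ∀ x, G x)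
    (hanom : CosetAnomaly nar v K k (k + 1) D h)
    (a : ι) (ha : a ∈ D)
    (hbar : ∀ x, G x) (hbarSol : CosetSol nar v K hbar) (hbara : hbar a = h a) :
    CosetAnomaly' nar v K a (k - 1) k (D.erase a) (fun x => h x * (hbar x)⁻¹) :=
  anomaly_descent_general nar v K k hk D h hanom a ha hbar hbarSol hbara
end
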